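/- In the Sierpinski space, the map r : 𝕊 → ℝ_l⁺ satisfies the modularity identity r(s ∨ t) + r(s ∧ t) = r(s) + r(t) for all s, t ∈ 𝕊, and the multiplicativity identity r(s ∧ t) = r(s)·r(t). -/
import Mathlib


/-- The initial σ-frame `𝕊`, as the least subset of the propositions `Ω = Prop`
containing `False` and `True` and closed under joins of increasing ω-chains
(equivalently, the image of the free ω-cpo completion of `𝔹 = {⊥ ≤ ⊤}` in `Ω`). -/
inductive InS : Prop → Prop
  | bot : InS False
  | top : InS True
  | sup (c : ℕ → Prop) (mono : ∀ n, c n → c (n + 1)) (h : ∀ n, InS (c n)) :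
      InS (∃ n, c n)

theorem InS.of_decidable (p : Prop) [Decidable p] : InS p := by
  by_cases h : p
  · rw [eq_true h]; exact InS.top
  · rw [eq_false h]; exact InS.bot

/-- A map between preorders is ω-(Scott-)continuous if it is monotone and preserves
least upper bounds of enumerable directed subsets. -/
def OmegaContinuous {C D : Type} [Preorder C] [Preorder D] (f : C → D) : Prop :=
  Monotone f ∧
    ∀ (U : Set C) (x : C), U.Countable → U.Nonempty → DirectedOn (· ≤ ·) U →
      IsLUB U x → IsLUB (f '' U) (f x)

/-- A preorder is an ω-cpo if every enumerable directed subset has a least upper bound. -/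
def IsOmegaCPO (C : Type) [Preorder C] : Prop :=
  ∀ U : Set C, U.Countable → U.Nonempty → DirectedOn (· ≤ ·) U → ∃ x, IsLUB U x

/-- A cover-preserving monotone map from an ω-cpo presentation `(P, Cov)` into an
ordered set: the image of each cover has a least upper bound above the image of the
covered element. -/
def CovMorphism {P C : Type} [Preorder P] [Preorder C]
    (Cov : P → Set P → Prop) (f : P → C) : Prop :=
  Monotone f ∧ ∀ p U, Cov p U → ∃ s, IsLUB (f '' U) s ∧ f p ≤ s

/-- `(Pω, η)` is the free ω-cpo completion of the ω-cpo presentation `(P, Cov)`: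
`Pω` is an ω-cpo, `η` is a cover-preserving monotone map, and every cover-preserving
monotone map from `P` into an ω-cpo extends uniquely to an ω-continuous map on `Pω`. -/
structure IsFreeOmegaCompletion {P : Type} [Preorder P] (Cov : P → Set P → Prop)
    (Pω : Type) [PartialOrder Pω] (η : P → Pω) : Prop where
  cpo : IsOmegaCPO Pω
  eta_morph : CovMorphism Cov η
  extend_unique : ∀ (C : Type) [PartialOrder C], IsOmegaCPO C →
    ∀ f : P → C, CovMorphism Cov f →
      ∃! g : Pω → C, OmegaContinuous g ∧ ∀ p, g (η p) = f p

/-- The Sierpinski space as a subtype of the propositions, ordered by implication. -/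
abbrev Sierp := {p : Prop // InS p}

theorem InS.or {p q : Prop} (hp : InS p) (hq : InS q) : InS (p ∨ q) := by
  induction hp with
  | bot => simp only [false_or]; exact hq
  | top => simp only [true_or]; exact InS.top
  | sup c mono h ih =>
      have e : ((∃ n, c n) ∨ q) = (∃ n, c n ∨ q) := propext <| by
        constructor
        · rintro (⟨n, hn⟩ | hq')
          · exact ⟨n, Or.inl hn⟩
          · exact ⟨0, Or.inr hq'⟩
        · rintro ⟨n, hn | hq'⟩
          · exact Or.inl ⟨n, hn⟩
          · exact Or.inr hq'
      rw [e]
      exact InS.sup _ (fun n => Or.imp_left (mono n)) ih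

theorem InS.and {p q : Prop} (hp : InS p) (hq : InS q) : InS (p ∧ q) := by
  induction hp with
  | bot => simp only [false_and]; exact InS.bot
  | top => simp only [true_and]; exact hq
  | sup c mono h ih =>
      have e : ((∃ n, c n) ∧ q) = (∃ n, c n ∧ q) := propext <| by
        constructor
        · rintro ⟨⟨n, hn⟩, hq'⟩
          exact ⟨n, hn, hq'⟩
        · rintro ⟨n, hn, hq'⟩
          exact ⟨⟨n, hn⟩, hq'⟩
      rw [e]
      exact InS.sup _ (fun n => And.imp_left (mono n)) ih

theorem InS.exists_nat (p : ℕ → Prop) (h : ∀ n, InS (p n)) : InS (∃ n, p n) := by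
  have key : ∀ m, InS (∃ k, k ≤ m ∧ p k) := by
    intro m
    induction m with
    | zero =>
        have e : (∃ k, k ≤ 0 ∧ p k) = p 0 := propext <| by
          constructor
          · rintro ⟨k, hk, hp⟩
            rwa [Nat.le_zero.mp hk] at hp
          · exact fun hp => ⟨0, le_refl _, hp⟩
        rw [e]; exact h 0
    | succ m ih =>
        have e : (∃ k, k ≤ m + 1 ∧ p k) = ((∃ k, k ≤ m ∧ p k) ∨ p (m + 1)) :=
          propext <| by
            constructor
            · rintro ⟨k, hk, hp⟩
              rcases Nat.eq_or_lt_of_le hk with rfl | hk'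
              · exact Or.inr hp
              · exact Or.inl ⟨k, Nat.lt_succ_iff.mp hk', hp⟩
            · rintro (⟨k, hk, hp⟩ | hp)
              · exact ⟨k, hk.trans (Nat.le_succ m), hp⟩
              · exact ⟨m + 1, le_refl _, hp⟩
        rw [e]; exact ih.or (h (m + 1))
  have e : (∃ n, p n) = (∃ m, ∃ k, k ≤ m ∧ p k) := propext <| by
    constructor
    · rintro ⟨n, hn⟩
      exact ⟨n, n, le_refl _, hn⟩
    · rintro ⟨m, k, _, hk⟩
      exact ⟨k, hk⟩
  rw [e]
  exact InS.sup _ (fun m ⟨k, hk, hp⟩ => ⟨k, hk.trans (Nat.le_succ m), hp⟩) key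

def Sierp.botS : Sierp := ⟨False, InS.bot⟩
def Sierp.topS : Sierp := ⟨True, InS.top⟩
def Sierp.or (s t : Sierp) : Sierp := ⟨s.1 ∨ t.1, s.2.or t.2⟩
def Sierp.and (s t : Sierp) : Sierp := ⟨s.1 ∧ t.1, s.2.and t.2⟩

/-- Enumerable joins in the Sierpinski space. -/
def Sierp.joinSeq (s : ℕ → Sierp) : Sierp :=
  ⟨∃ n, (s n).1, InS.exists_nat _ (fun n => (s n).2)⟩

/-- A lower real: an `𝕊`-valued, inhabited, rounded, downward-closed cut of rationals. -/
structure LowerReal where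
  cut : ℚ → Prop
  inS : ∀ q, InS (cut q)
  inhab : ∃ q, cut q
  rounded : ∀ q, cut q → ∃ q', q < q' ∧ cut q'
  lower : ∀ q q', q < q' → cut q' → cut q

instance : Preorder LowerReal where
  le L₁ L₂ := ∀ q, L₁.cut q → L₂.cut q
  le_refl _ _ h := h
  le_trans _ _ _ h₁ h₂ q hq := h₂ q (h₁ q hq)

/-- The lower real associated to a rational number. -/
def ratLR (q : ℚ) : LowerReal where
  cut p := p < q
  inS _ := InS.of_decidable _
  inhab := ⟨q - 1, by linarith⟩
  rounded p hp := ⟨(p + q) / 2, by constructor <;> linarith⟩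
  lower _ _ h h' := lt_trans h h'

/-- The non-negative rationals. -/
abbrev QPlus := {q : ℚ // 0 ≤ q}

/-- The non-negative lower reals `ℝ_l⁺`. -/
abbrev NNLowerReal := {L : LowerReal // ∀ q : ℚ, q < 0 → L.cut q}

/-- The non-negative lower real associated to a non-negative rational. -/
def ratNN (q : QPlus) : NNLowerReal :=
  ⟨ratLR q.1, fun _ hp => lt_of_lt_of_le hp q.2⟩

def zeroNN : NNLowerReal := ratNN ⟨0, le_refl 0⟩
def oneNN : NNLowerReal := ratNN ⟨1, by norm_num⟩

/-- `r : 𝕊 → ℝ_l⁺`, the unique ω-continuous map with `r ⊥ = 0` and `r ⊤ = 1`;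
`indicatorLR (U a)` is the real indicator function `𝟙_U` of an open `U`. -/
def indicatorLR (s : Sierp) : NNLowerReal :=
  ⟨{ cut := fun q => q < 0 ∨ (s.1 ∧ q < 1)
     inS := fun q => by
       show InS (q < 0 ∨ (s.1 ∧ q < 1))
       by_cases h0 : q < 0
       · rw [eq_true (Or.inl h0 : q < 0 ∨ (s.1 ∧ q < 1))]; exact InS.top
       · rw [eq_false h0, false_or]
         by_cases h1 : q < 1
         · rw [eq_true h1, and_true]; exact s.2
         · rw [eq_false h1, and_false]; exact InS.bot
     inhab := ⟨-1, Or.inl (by norm_num)⟩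
     rounded := fun q hq => by
       rcases hq with h | ⟨hs, h1⟩
       · exact ⟨q / 2, by linarith, Or.inl (by linarith)⟩
       · exact ⟨(q + 1) / 2, by
           constructor
           · linarith
           · exact Or.inr ⟨hs, by linarith⟩⟩
     lower := fun q q' h hq' => by
       rcases hq' with h' | ⟨hs, h1⟩
       · exact Or.inl (lt_trans h h')
       · by_cases h0 : q < 0
         · exact Or.inl h0
         · exact Or.inr ⟨hs, lt_trans h h1⟩ },
   fun q hq => Or.inl hq⟩

/-- Specification of the addition on the non-negative lower reals: ω-continuous in
each argument and extending addition of non-negative rationals. -/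
def AddSpecNN (add : NNLowerReal → NNLowerReal → NNLowerReal) : Prop :=
  (∀ L, OmegaContinuous (add L)) ∧ (∀ L, OmegaContinuous (fun x => add x L)) ∧
    ∀ q q' : QPlus, add (ratNN q) (ratNN q') = ratNN ⟨q.1 + q'.1, add_nonneg q.2 q'.2⟩

/-- Specification of the multiplication on the non-negative lower reals: ω-continuous
in each argument and extending multiplication of non-negative rationals. -/
def MulSpecNN (mul : NNLowerReal → NNLowerReal → NNLowerReal) : Prop :=
  (∀ L, OmegaContinuous (mul L)) ∧ (∀ L, OmegaContinuous (fun x => mul x L)) ∧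
    ∀ q q' : QPlus, mul (ratNN q) (ratNN q') = ratNN ⟨q.1 * q'.1, mul_nonneg q.2 q'.2⟩

/-- A lower integral on `A`: an ω-continuous, bottom-preserving, additive map
`(A → ℝ_l⁺) → ℝ_l⁺`. -/
def IsLowerIntegral {A : Type} (add : NNLowerReal → NNLowerReal → NNLowerReal)
    (I : (A → NNLowerReal) → NNLowerReal) : Prop :=
  OmegaContinuous I ∧ I (fun _ => zeroNN) = zeroNN ∧
    ∀ f g : A → NNLowerReal, I (fun a => add (f a) (g a)) = add (I f) (I g)

/-- A valuation on `A`: an ω-continuous, bottom-preserving, modular map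
`𝒪(A) = (A → 𝕊) → ℝ_l⁺`. -/
def IsValuation {A : Type} (add : NNLowerReal → NNLowerReal → NNLowerReal)
    (μ : (A → Sierp) → NNLowerReal) : Prop :=
  OmegaContinuous μ ∧ μ (fun _ => Sierp.botS) = zeroNN ∧
    ∀ U V : A → Sierp,
      add (μ U) (μ V) =
        add (μ (fun a => (U a).or (V a))) (μ (fun a => (U a).and (V a)))

theorem LowerReal.ext' {L₁ L₂ : LowerReal} (h : L₁.cut = L₂.cut) : L₁ = L₂ := by
  cases L₁; cases L₂; cases h; rfl

theorem NNLowerReal.ext' {L₁ L₂ : NNLowerReal} (h : L₁.1.cut = L₂.1.cut) : L₁ = L₂ :=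
  Subtype.ext (LowerReal.ext' h)

theorem indicatorLR_true {s : Sierp} (hs : s.1) : indicatorLR s = oneNN := by
  apply NNLowerReal.ext'
  funext q
  show (q < 0 ∨ (s.1 ∧ q < 1)) = (q < (1:ℚ))
  apply propext
  constructor
  · rintro (h | ⟨_, h⟩)
    · linarith
    · exact h
  · intro h
    by_cases h0 : q < 0
    · exact Or.inl h0
    · exact Or.inr ⟨hs, h⟩

theorem indicatorLR_false {s : Sierp} (hs : ¬ s.1) : indicatorLR s = zeroNN := by
  apply NNLowerReal.ext'
  funext q
  show (q < 0 ∨ (s.1 ∧ q < 1)) = (q < (0:ℚ))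
  apply propext
  constructor
  · rintro (h | ⟨h, _⟩)
    · exact h
    · exact absurd h hs
  · exact Or.inl

theorem ratNN_congr {q q' : QPlus} (h : q.1 = q'.1) : ratNN q = ratNN q' := by
  congr 1
  exact Subtype.ext h

/-- the map `r : 𝕊 → ℝ_l⁺` satisfies the modularity identity
`r(s ∨ t) + r(s ∧ t) = r(s) + r(t)` and the multiplicativity identity
`r(s ∧ t) = r(s)·r(t)`. -/
theorem indicator_modular_and_multiplicative
    (add mul : NNLowerReal → NNLowerReal → NNLowerReal)
    (hadd : AddSpecNN add) (hmul : MulSpecNN mul) :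
    (∀ s t : Sierp,
        add (indicatorLR (s.or t)) (indicatorLR (s.and t)) =
          add (indicatorLR s) (indicatorLR t)) ∧
      (∀ s t : Sierp, indicatorLR (s.and t) = mul (indicatorLR s) (indicatorLR t)) := by
  obtain ⟨-, -, haddQ⟩ := hadd
  obtain ⟨-, -, hmulQ⟩ := hmul
  have hor : ∀ s t : Sierp, (s.or t).1 = (s.1 ∨ t.1) := fun _ _ => rfl
  have hand : ∀ s t : Sierp, (s.and t).1 = (s.1 ∧ t.1) := fun _ _ => rfl
  constructor
  · intro s t
    by_cases hs : s.1 <;> by_cases ht : t.1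
    · rw [indicatorLR_true hs, indicatorLR_true ht,
        indicatorLR_true (show (s.or t).1 from Or.inl hs),
        indicatorLR_true (show (s.and t).1 from ⟨hs, ht⟩)]
    · rw [indicatorLR_true hs, indicatorLR_false ht,
        indicatorLR_true (show (s.or t).1 from Or.inl hs),
        indicatorLR_false (show ¬ (s.and t).1 from fun h => ht h.2)]
    · rw [indicatorLR_false hs, indicatorLR_true ht,
        indicatorLR_true (show (s.or t).1 from Or.inr ht),
        indicatorLR_false (show ¬ (s.and t).1 from fun h => hs h.1)]
      show add (ratNN _) (ratNN _) = add (ratNN _) (ratNN _)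
      rw [haddQ, haddQ]
      exact ratNN_congr (by norm_num)
    · rw [indicatorLR_false hs, indicatorLR_false ht,
        indicatorLR_false (show ¬ (s.or t).1 from fun h => h.elim hs ht),
        indicatorLR_false (show ¬ (s.and t).1 from fun h => hs h.1)]
  · intro s t
    by_cases hs : s.1 <;> by_cases ht : t.1
    · rw [indicatorLR_true hs, indicatorLR_true ht,
        indicatorLR_true (show (s.and t).1 from ⟨hs, ht⟩)]
      show ratNN _ = mul (ratNN _) (ratNN _)
      rw [hmulQ]
      exact ratNN_congr (by norm_num)
    · rw [indicatorLR_true hs, indicatorLR_false ht,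
        indicatorLR_false (show ¬ (s.and t).1 from fun h => ht h.2)]
      show ratNN _ = mul (ratNN _) (ratNN _)
      rw [hmulQ]
      exact ratNN_congr (by norm_num)
    · rw [indicatorLR_false hs, indicatorLR_true ht,
        indicatorLR_false (show ¬ (s.and t).1 from fun h => hs h.1)]
      show ratNN _ = mul (ratNN _) (ratNN _)
      rw [hmulQ]
      exact ratNN_congr (by norm_num)
    · rw [indicatorLR_false hs, indicatorLR_false ht,
        indicatorLR_false (show ¬ (s.and t).1 from fun h => hs h.1)]
      show ratNN _ = mul (ratNN _) (ratNN _)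
      rw [hmulQ]
      exact ratNN_congr (by norm_num)
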